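/- arXiv:2605.01444 — 3 statements merged into one kernel-verified Lean document; each statement's English description precedes it below -/
import Mathlib

section
/- For λ > 1, let q(λ) be the extinction probability of a Galton–Watson process with Poisson(λ) offspring (so q = e^{−λ(1−q)} and 0 < q < 1), and let β(λ) = E[1/|PGW(λ)|·1_{|PGW(λ)|<∞}] = Σ_{m≥1} (1/m)·e^{−λm}(λm)^{m−1}/m!. Then β(λ) = q(λ) − λ·q(λ)²/2. -/
/-!
With `t = λq` the fixed-point equation reads `e^{-λ} = q e^{-t}`, which turns `β(λ)` into
`U(t e^{-t}) / λ`, where `U(z) = ∑ m^{m-2} z^m / m!`; convexity of `exp` gives `t < 1`.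
For small `|t|`, expanding `e^{-mt}` and collecting powers of `t` shows that the coefficient of
`t^n` in `U(t e^{-t})` is `1/n!` times the `n`-th finite difference of `k ↦ k^{n-2}` at `0`, which
vanishes for `n ≥ 3`; hence `U(t e^{-t}) = t - t²/2`. Both sides are analytic in `t` while
`|t e^{-t}| < e^{-1}`, the radius of convergence of `U`, which holds on `(-1/8, 1)`, so the
identity theorem extends the identity to every `t < 1`.
-/

open Finset Real Nat

/-- `m^(m-2)/m!`, written with real division so that the coefficient of `z^0` is `0` and no
truncated exponent appears. -/
noncomputable def cayleyCoeff (m : ℕ) : ℝ := (m : ℝ) ^ m / m ! / (m : ℝ) ^ 2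

noncomputable def cayleySeries (z : ℝ) : ℝ := ∑' m, cayleyCoeff m * z ^ m

lemma cayleyCoeff_zero : cayleyCoeff 0 = 0 := by simp [cayleyCoeff]

lemma cayleyCoeff_nonneg (m : ℕ) : 0 ≤ cayleyCoeff m := by unfold cayleyCoeff; positivity

lemma cayleyCoeff_le_exp_pow (m : ℕ) : cayleyCoeff m ≤ exp 1 ^ m := by
  rcases Nat.eq_zero_or_pos m with rfl | hm
  · simp [cayleyCoeff]
  calc cayleyCoeff m ≤ (m : ℝ) ^ m / m ! :=
        div_le_self (by positivity) (one_le_pow₀ (by exact_mod_cast hm))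
    _ ≤ exp m := pow_div_factorial_le_exp _ (by positivity) m
    _ = exp 1 ^ m := by rw [← exp_nat_mul, mul_one]

lemma cayleySeries_eq_tsum_succ (z : ℝ) :
    cayleySeries z = ∑' k, cayleyCoeff (k + 1) * z ^ (k + 1) :=
  (Nat.succ_injective.tsum_eq (f := fun m => cayleyCoeff m * z ^ m) fun m hm => by
    obtain ⟨k, rfl⟩ := Nat.exists_eq_succ_of_ne_zero (n := m) fun h => by
      simp [h, cayleyCoeff_zero] at hm
    exact ⟨k, rfl⟩).symm

lemma analyticAt_cayleySeries {z : ℝ} (hz : |z| < exp (-1)) : AnalyticAt ℝ cayleySeries z := by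
  set p := FormalMultilinearSeries.ofScalars ℝ cayleyCoeff
  obtain ⟨r, hr⟩ : ∃ r : NNReal, (r : ℝ) = exp (-1) :=
    ⟨⟨exp (-1), (exp_pos _).le⟩, rfl⟩
  have hp : (r : ENNReal) ≤ p.radius :=
    p.le_radius_of_bound 1 fun n => by
      rw [hr, FormalMultilinearSeries.ofScalars_norm, Real.norm_of_nonneg (cayleyCoeff_nonneg n)]
      calc cayleyCoeff n * exp (-1) ^ n ≤ exp 1 ^ n * exp (-1) ^ n := by
            gcongr; exact cayleyCoeff_le_exp_pow n
        _ = 1 := by rw [← mul_pow, ← exp_add]; simp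
  have hsum : p.sum = cayleySeries := funext fun z =>
    (FormalMultilinearSeries.ofScalars_sum_eq cayleyCoeff z).trans (by simp [cayleySeries])
  rw [← hsum]
  have hr0 : (0 : ENNReal) < r :=
    ENNReal.coe_pos.2 (by rw [← NNReal.coe_pos, hr]; exact exp_pos _)
  refine (p.hasFPowerSeriesOnBall (hr0.trans_le hp)).analyticAt_of_mem ?_
  rw [Metric.mem_eball, edist_zero_right]
  refine lt_of_lt_of_le ?_ hp
  rw [enorm_eq_nnnorm, ENNReal.coe_lt_coe, ← NNReal.coe_lt_coe, coe_nnnorm, hr]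
  exact hz

lemma alternating_sum_choose_mul_pow_eq_zero {n d : ℕ} (hd : d < n) :
    ∑ k ∈ range (n + 1), (-1 : ℝ) ^ (n - k) * n.choose k * (k : ℝ) ^ d = 0 := by
  have h := congrFun (fwdDiff_iter_pow_eq_zero_of_lt (R := ℝ) hd) 0
  rw [fwdDiff_iter_eq_sum_shift] at h
  simpa [zsmul_eq_mul, mul_assoc] using h

lemma cayleyCoeff_mul_neg_pow_div_factorial {k j : ℕ} (h : 3 ≤ k + j) :
    cayleyCoeff k * (-(k : ℝ)) ^ j / j ! =
      (-1) ^ j * (k + j).choose k * (k : ℝ) ^ (k + j - 2) / (k + j) ! := by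
  rcases Nat.eq_zero_or_pos k with rfl | hk
  · have : j - 2 ≠ 0 := by omega
    simp [cayleyCoeff, this]
  have hpow : (k : ℝ) ^ k * k ^ j = k ^ (k + j - 2) * k ^ 2 := by
    rw [← pow_add, ← pow_add]; congr 1; omega
  rw [Nat.cast_choose ℝ (by omega), Nat.add_sub_cancel_left, neg_pow, cayleyCoeff]
  field_simp
  linear_combination hpow

lemma sum_antidiagonal_cayleyCoeff_of_three_le {n : ℕ} (hn : 3 ≤ n) :
    ∑ p ∈ antidiagonal n, cayleyCoeff p.1 * (-(p.1 : ℝ)) ^ p.2 / p.2 ! = 0 := by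
  rw [Nat.sum_antidiagonal_eq_sum_range_succ_mk, sum_congr rfl fun k hk => by
    rw [cayleyCoeff_mul_neg_pow_div_factorial (by have := mem_range.1 hk; omega),
      Nat.add_sub_cancel' (by have := mem_range.1 hk; omega)]]
  rw [← sum_div, alternating_sum_choose_mul_pow_eq_zero (by omega), zero_div]

lemma tsum_eq_tsum_sum_antidiagonal {A α : Type*} [AddCommMonoid A] [HasAntidiagonal A]
    [AddCommGroup α] [TopologicalSpace α] [IsTopologicalAddGroup α] [T3Space α]
    {f : A × A → α} (hf : Summable f) :
    ∑' p, f p = ∑' n, ∑ p ∈ antidiagonal n, f p := by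
  conv_rhs => congr; ext; rw [← Finset.sum_finset_coe, ← tsum_fintype (L := .unconditional _)]
  rw [← HasAntidiagonal.sigmaAntidiagonalEquivProd.tsum_eq f]
  exact (HasAntidiagonal.sigmaAntidiagonalEquivProd.summable_iff.2 hf).tsum_sigma'
    fun n ↦ (hasSum_fintype _).summable

lemma Real.hasSum_pow_div_factorial (x : ℝ) : HasSum (fun n => x ^ n / n !) (exp x) := by
  rw [Real.exp_eq_exp_ℝ]; exact NormedSpace.expSeries_div_hasSum_exp x

lemma cayleySeries_mul_exp_neg_of_abs_mul_exp_lt {t : ℝ} (ht : |t| * exp |t| < exp (-1)) :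
    cayleySeries (t * exp (-t)) = t - t ^ 2 / 2 := by
  set f : ℕ × ℕ → ℝ := fun p => cayleyCoeff p.1 * t ^ p.1 * ((-(p.1 * t)) ^ p.2 / p.2 !)
  have hr : exp 1 * (|t| * exp |t|) < 1 := by
    calc exp 1 * (|t| * exp |t|) < exp 1 * exp (-1) := by gcongr
      _ = 1 := by rw [← exp_add]; simp
  have hf : Summable f := by
    set g : ℕ × ℕ → ℝ := fun p => cayleyCoeff p.1 * |t| ^ p.1 * ((p.1 * |t|) ^ p.2 / p.2 !)
    have hg0 : 0 ≤ g := fun p => by have := cayleyCoeff_nonneg p.1; positivity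
    have hrow (m : ℕ) : HasSum (fun j => g (m, j)) (cayleyCoeff m * (|t| * exp |t|) ^ m) := by
      have h := (Real.hasSum_pow_div_factorial (m * |t|)).mul_left (cayleyCoeff m * |t| ^ m)
      rwa [exp_nat_mul, mul_assoc, ← mul_pow] at h
    refine Summable.of_norm_bounded
      ((summable_prod_of_nonneg hg0).2 ⟨fun m => (hrow m).summable, ?_⟩) fun p => ?_
    · simp_rw [fun m => (hrow m).tsum_eq]
      refine Summable.of_nonneg_of_le (fun m => by have := cayleyCoeff_nonneg m; positivity)
        (fun m => ?_) (summable_geometric_of_lt_one (by positivity) hr)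
      rw [mul_pow (exp 1)]
      gcongr
      exact cayleyCoeff_le_exp_pow m
    · simp [f, g, abs_of_nonneg (cayleyCoeff_nonneg _)]
  have hexpand : ∀ m, cayleyCoeff m * (t * exp (-t)) ^ m = ∑' j, f (m, j) := fun m => by
    simp only [f]
    rw [tsum_mul_left, (Real.hasSum_pow_div_factorial _).tsum_eq, mul_pow, ← exp_nat_mul, mul_neg,
      mul_assoc]
  have hcoeff (n : ℕ) : ∑ p ∈ antidiagonal n, f p =
      t ^ n * ∑ p ∈ antidiagonal n, cayleyCoeff p.1 * (-(p.1 : ℝ)) ^ p.2 / p.2 ! := by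
    rw [mul_sum]
    refine sum_congr rfl fun p hp => ?_
    rw [← mem_antidiagonal.1 hp]
    ring
  calc cayleySeries (t * exp (-t)) = ∑' m, ∑' j, f (m, j) := tsum_congr hexpand
    _ = ∑' p, f p := (hf.tsum_prod' hf.prod_factor).symm
    _ = ∑' n, ∑ p ∈ antidiagonal n, f p := tsum_eq_tsum_sum_antidiagonal hf
    _ = ∑ n ∈ range 3, ∑ p ∈ antidiagonal n, f p := tsum_eq_sum fun n hn => by
          rw [hcoeff, sum_antidiagonal_cayleyCoeff_of_three_le (by simpa using hn), mul_zero]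
    _ = t - t ^ 2 / 2 := by
          simp [sum_range_succ, Nat.sum_antidiagonal_eq_sum_range_succ_mk, f, cayleyCoeff]
          ring

lemma abs_mul_exp_abs_lt_exp_neg_one {t : ℝ} (ht : |t| < 1 / 8) : |t| * exp |t| < exp (-1) := by
  have he : exp 1 < 2.7182818286 := exp_one_lt_d9
  have h1 : exp |t| ≤ exp 1 := exp_le_exp.2 (by linarith)
  have h2 : exp (-1) * exp 1 = 1 := by rw [← exp_add]; simp
  nlinarith [exp_pos 1, abs_nonneg t, exp_pos |t|, exp_pos (-1)]

lemma abs_mul_exp_neg_lt_exp_neg_one {t : ℝ} (ht0 : -1 / 8 < t) (ht1 : t < 1) :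
    |t * exp (-t)| < exp (-1) := by
  rcases le_or_gt 0 t with ht | ht
  · rw [abs_of_nonneg (by positivity)]
    calc t * exp (-t) < exp (t - 1) * exp (-t) :=
          mul_lt_mul_of_pos_right (by linarith [add_one_lt_exp (x := t - 1) (by linarith)])
            (exp_pos _)
      _ = exp (-1) := by rw [← exp_add]; ring_nf
  · have h := abs_mul_exp_abs_lt_exp_neg_one (t := t) (abs_lt.2 ⟨by linarith, by linarith⟩)
    rw [abs_of_neg ht] at h
    rwa [abs_mul, abs_of_pos (exp_pos _), abs_of_neg ht]

lemma cayleySeries_mul_exp_neg {t : ℝ} (ht0 : -1 / 8 < t) (ht1 : t < 1) :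
    cayleySeries (t * exp (-t)) = t - t ^ 2 / 2 := by
  have hU : AnalyticOnNhd ℝ (fun s => cayleySeries (s * exp (-s))) (Set.Ioo (-1 / 8) 1) :=
    fun s hs => (analyticAt_cayleySeries (abs_mul_exp_neg_lt_exp_neg_one hs.1 hs.2)).comp
      (f := fun s : ℝ => s * exp (-s)) (by fun_prop)
  have hV : AnalyticOnNhd ℝ (fun s : ℝ => s - s ^ 2 / 2) (Set.Ioo (-1 / 8) 1) :=
    fun s _ => by fun_prop
  refine hU.eqOn_of_preconnected_of_eventuallyEq hV isPreconnected_Ioo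
    (z₀ := 0) (by norm_num) ?_ ⟨ht0, ht1⟩
  filter_upwards [Ioo_mem_nhds (by norm_num : (-1 / 8 : ℝ) < 0) (by norm_num : (0 : ℝ) < 1 / 8)]
    with s hs
  exact cayleySeries_mul_exp_neg_of_abs_mul_exp_lt
    (abs_mul_exp_abs_lt_exp_neg_one (abs_lt.2 ⟨by linarith [hs.1], hs.2⟩))

lemma mul_lt_one_of_eq_exp {lam q : ℝ} (hlam : lam ≠ 0) (hq0 : 0 < q) (hq1 : q < 1)
    (hfix : q = exp (-lam * (1 - q))) : lam * q < 1 := by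
  have h := add_one_lt_exp (x := lam * (1 - q)) (mul_ne_zero hlam (by linarith))
  have hinv : q * exp (lam * (1 - q)) = 1 := by
    nth_rewrite 1 [hfix]
    rw [← exp_add, neg_mul, neg_add_cancel, exp_zero]
  nlinarith

/-- For `λ > 1`, if `q` is the extinction probability of a Poisson(λ)
Galton–Watson process (so `q = e^{-λ(1-q)}` with `0 < q < 1`), then
`β(λ) = Σ_{m ≥ 1} (1/m)·e^{-λm}(λm)^{m-1}/m!` satisfies `β = q − λq²/2`.
(The sum is reindexed by `m = k + 1`, `k : ℕ`.) -/
theorem stmt8 (lam q : ℝ) (hlam : 1 < lam) (hq0 : 0 < q) (hq1 : q < 1)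
    (hfix : q = Real.exp (-lam * (1 - q))) :
    ∑' k : ℕ, (1 / ((k : ℝ) + 1)) * Real.exp (-lam * ((k : ℝ) + 1))
        * (lam * ((k : ℝ) + 1)) ^ k / (Nat.factorial (k + 1))
      = q - lam * q ^ 2 / 2 := by
  have hlam0 : lam ≠ 0 := by positivity
  obtain ⟨t, ht⟩ : ∃ t, t = lam * q := ⟨_, rfl⟩
  have hexp : exp (-lam) = q * exp (-t) := by
    nth_rewrite 1 [hfix]
    rw [← exp_add, ht]; ring_nf
  have hterm : ∀ k : ℕ, (1 / ((k : ℝ) + 1)) * exp (-lam * ((k : ℝ) + 1))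
        * (lam * ((k : ℝ) + 1)) ^ k / (Nat.factorial (k + 1))
      = cayleyCoeff (k + 1) * (t * exp (-t)) ^ (k + 1) / lam := fun k => by
    have hk : exp (-lam * ((k : ℝ) + 1)) = (q * exp (-t)) ^ (k + 1) := by
      rw [← hexp, ← exp_nat_mul]; push_cast; ring_nf
    rw [hk, cayleyCoeff, ht, mul_pow lam]
    field_simp
    push_cast
    ring
  have ht0 : -1 / 8 < t := by rw [ht]; nlinarith
  have ht1 : t < 1 := ht ▸ mul_lt_one_of_eq_exp hlam0 hq0 hq1 hfix
  rw [tsum_congr hterm, tsum_div_const, ← cayleySeries_eq_tsum_succ,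
    cayleySeries_mul_exp_neg ht0 ht1, ht]
  field_simp
end

section
/- ∫₀^∞ e^{−t}(1 − t/(e^t−1))² dt = 5 − 4ζ(3), where ζ(3) = Σ_{k≥1} 1/k³. -/
/-!
For `t > 0`, geometric series in `e^{-t}` give `e^{-t}/(e^t-1) = ∑_{n≥2} e^{-nt}` and
`e^{-t}/(e^t-1)^2 = ∑_{n≥2} (n-2) e^{-nt}`, so the integrand equals
`e^{-t} + ∑_{n≥2} ((n-2)t^2 - 2t) e^{-nt}`. Since `∫₀^∞ t^m e^{-nt} dt = m!/n^{m+1}`, the `n`-th term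
integrates to `2(n-2)/n^3 - 2/n^2 = -4/n^3`, and the integral is `1 - 4(ζ(3) - 1)`. Termwise
integration is legitimate because the `L¹` norms of the terms are `O(1/n^2)`.
-/

open Real MeasureTheory Set
open scoped Nat

lemma integrableOn_pow_mul_exp_neg_mul_Ioi (m : ℕ) {c : ℝ} (hc : 0 < c) :
    IntegrableOn (fun t : ℝ => t ^ m * exp (-(c * t))) (Ioi 0) := by
  refine (integrableOn_rpow_mul_exp_neg_mul_rpow (s := m) (p := 1)
    (by linarith [m.cast_nonneg (α := ℝ)]) one_pos hc).congr_fun (fun t _ => ?_) measurableSet_Ioi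
  simp [neg_mul]

lemma integral_pow_mul_exp_neg_mul_Ioi (m : ℕ) {c : ℝ} (hc : 0 < c) :
    ∫ t in Ioi 0, t ^ m * exp (-(c * t)) = m ! / c ^ (m + 1) := by
  have h := integral_rpow_mul_exp_neg_mul_Ioi (a := m + 1) (by positivity) hc
  rw [add_sub_cancel_right, Gamma_nat_eq_factorial] at h
  simp_rw [rpow_natCast] at h
  rw [h, ← Nat.cast_succ, rpow_natCast, one_div_pow, one_div_mul_eq_div]

section QuadraticMulExp

variable (a b : ℝ) {c : ℝ}

lemma quadratic_mul_exp_eq (t : ℝ) : (a * t ^ 2 + b * t) * exp (-(c * t)) =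
    a * (t ^ 2 * exp (-(c * t))) + b * (t ^ 1 * exp (-(c * t))) := by
  ring

variable (hc : 0 < c)
include hc

lemma integrableOn_quadratic_mul_exp_neg_mul_Ioi :
    IntegrableOn (fun t : ℝ => (a * t ^ 2 + b * t) * exp (-(c * t))) (Ioi 0) := by
  simp_rw [quadratic_mul_exp_eq]
  exact ((integrableOn_pow_mul_exp_neg_mul_Ioi 2 hc).const_mul a).add
    ((integrableOn_pow_mul_exp_neg_mul_Ioi 1 hc).const_mul b)

lemma integral_quadratic_mul_exp_neg_mul_Ioi :
    ∫ t in Ioi 0, (a * t ^ 2 + b * t) * exp (-(c * t)) = 2 * a / c ^ 3 + b / c ^ 2 := by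
  simp_rw [quadratic_mul_exp_eq]
  rw [integral_add ((integrableOn_pow_mul_exp_neg_mul_Ioi 2 hc).const_mul a)
    ((integrableOn_pow_mul_exp_neg_mul_Ioi 1 hc).const_mul b), integral_const_mul,
    integral_const_mul, integral_pow_mul_exp_neg_mul_Ioi 2 hc,
    integral_pow_mul_exp_neg_mul_Ioi 1 hc]
  norm_num
  ring

lemma integral_norm_quadratic_mul_exp_neg_mul_Ioi_le :
    ∫ t in Ioi 0, ‖(a * t ^ 2 + b * t) * exp (-(c * t))‖ ≤ 2 * |a| / c ^ 3 + |b| / c ^ 2 := by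
  rw [← integral_quadratic_mul_exp_neg_mul_Ioi |a| |b| hc]
  refine setIntegral_mono_on (integrableOn_quadratic_mul_exp_neg_mul_Ioi a b hc).norm
    (integrableOn_quadratic_mul_exp_neg_mul_Ioi |a| |b| hc) measurableSet_Ioi
    fun t (ht : 0 < t) => ?_
  rw [norm_mul, norm_of_nonneg (exp_pos _).le]
  gcongr
  calc ‖a * t ^ 2 + b * t‖ ≤ |a * t ^ 2| + |b * t| := norm_add_le _ _
    _ = |a| * t ^ 2 + |b| * t := by rw [abs_mul, abs_mul, abs_of_pos ht, abs_sq]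

end QuadraticMulExp

lemma exp_neg_add_two_mul (t : ℝ) (k : ℕ) :
    exp (-((k + 2) * t)) = exp (-t) ^ k * exp (-t) ^ 2 := by
  rw [← exp_nat_mul, ← exp_nat_mul, ← exp_add]
  ring_nf

lemma exp_sub_one_eq_div (t : ℝ) : exp t - 1 = (1 - exp (-t)) / exp (-t) := by
  rw [exp_neg]
  field_simp

lemma hasSum_exp_neg_add_two_mul {t : ℝ} (ht : 0 < t) :
    HasSum (fun k : ℕ => exp (-((k + 2) * t))) (exp (-t) / (exp t - 1)) := by
  have hr : exp (-t) < 1 := exp_lt_one_iff.mpr (neg_lt_zero.mpr ht)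
  have hsum : exp (-t) / (exp t - 1) = (1 - exp (-t))⁻¹ * exp (-t) ^ 2 := by
    have : 1 - exp (-t) ≠ 0 := by linarith
    rw [exp_sub_one_eq_div]
    field_simp
  simp_rw [exp_neg_add_two_mul, hsum]
  exact (hasSum_geometric_of_lt_one (exp_pos _).le hr).mul_right _

lemma hasSum_natCast_mul_exp_neg_add_two_mul {t : ℝ} (ht : 0 < t) :
    HasSum (fun k : ℕ => k * exp (-((k + 2) * t))) (exp (-t) / (exp t - 1) ^ 2) := by
  have hr : exp (-t) < 1 := exp_lt_one_iff.mpr (neg_lt_zero.mpr ht)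
  have hsum : exp (-t) / (exp t - 1) ^ 2 = exp (-t) / (1 - exp (-t)) ^ 2 * exp (-t) ^ 2 := by
    have : 1 - exp (-t) ≠ 0 := by linarith
    rw [exp_sub_one_eq_div]
    field_simp
  simp_rw [exp_neg_add_two_mul, ← mul_assoc, hsum]
  exact (hasSum_coe_mul_geometric_of_norm_lt_one
    (by rwa [norm_of_nonneg (exp_pos _).le] : ‖exp (-t)‖ < 1)).mul_right _

lemma div_exp_sub_one_le_one {t : ℝ} (ht : 0 < t) : t / (exp t - 1) ≤ 1 :=
  div_le_one_of_le₀ (by linarith [add_one_le_exp t]) (sub_pos.mpr (one_lt_exp_iff.mpr ht)).le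

lemma integrableOn_exp_neg_mul_one_sub_div_exp_sub_one_sq :
    IntegrableOn (fun t : ℝ => exp (-t) * (1 - t / (exp t - 1)) ^ 2) (Ioi 0) := by
  refine Integrable.mono' (integrableOn_exp_neg_Ioi 0) (by fun_prop) ?_
  refine (ae_restrict_iff' measurableSet_Ioi).mpr (ae_of_all _ fun t (ht : 0 < t) => ?_)
  have hq₀ : 0 ≤ 1 - t / (exp t - 1) := sub_nonneg.mpr (div_exp_sub_one_le_one ht)
  have hq₁ : 1 - t / (exp t - 1) ≤ 1 :=
    sub_le_self _ (div_nonneg ht.le (sub_nonneg.mpr (one_le_exp ht.le)))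
  rw [norm_of_nonneg (by positivity)]
  exact mul_le_of_le_one_right (exp_pos _).le (pow_le_one₀ hq₀ hq₁)

lemma hasSum_exp_neg_mul_one_sub_div_exp_sub_one_sq {t : ℝ} (ht : 0 < t) :
    HasSum (fun k : ℕ => (k * t ^ 2 - 2 * t) * exp (-((k + 2) * t)))
      (exp (-t) * (1 - t / (exp t - 1)) ^ 2 - exp (-t)) := by
  have h := ((hasSum_natCast_mul_exp_neg_add_two_mul ht).mul_left (t ^ 2)).sub
    ((hasSum_exp_neg_add_two_mul ht).mul_left (2 * t))
  have hne : exp t - 1 ≠ 0 := (sub_pos.mpr (one_lt_exp_iff.mpr ht)).ne'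
  rw [show exp (-t) * (1 - t / (exp t - 1)) ^ 2 - exp (-t) =
      t ^ 2 * (exp (-t) / (exp t - 1) ^ 2) - 2 * t * (exp (-t) / (exp t - 1)) by
    field_simp
    ring]
  exact h.congr_fun fun k => by ring

lemma hasSum_integral_exp_neg_mul_one_sub_div_exp_sub_one_sq_sub_exp_neg :
    HasSum (fun k : ℕ => -4 / ((k : ℝ) + 2) ^ 3)
      (∫ t in Ioi 0, (exp (-t) * (1 - t / (exp t - 1)) ^ 2 - exp (-t))) := by
  have hc (k : ℕ) : (0 : ℝ) < k + 2 := by positivity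
  have hF (k : ℕ) (t : ℝ) : (k * t ^ 2 - 2 * t) * exp (-((k + 2) * t)) =
      (k * t ^ 2 + -2 * t) * exp (-((k + 2) * t)) := by ring
  rw [setIntegral_congr_fun measurableSet_Ioi fun t ht =>
    (hasSum_exp_neg_mul_one_sub_div_exp_sub_one_sq ht).tsum_eq.symm]
  refine (hasSum_integral_of_summable_integral_norm (fun k => ?_) ?_).congr_fun fun k => ?_
  · rw [funext (hF k)]
    exact integrableOn_quadratic_mul_exp_neg_mul_Ioi _ _ (hc k)
  · refine Summable.of_nonneg_of_le (fun k => integral_nonneg fun t => norm_nonneg _)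
      (fun k => ?_) (((summable_nat_add_iff 2).mpr
        (summable_one_div_nat_pow.mpr one_lt_two)).mul_left 4)
    simp_rw [hF k]
    refine (integral_norm_quadratic_mul_exp_neg_mul_Ioi_le _ _ (hc k)).trans ?_
    rw [abs_of_nonneg k.cast_nonneg, abs_neg, abs_two, div_add_div _ _ (by positivity)
      (by positivity), div_le_iff₀ (by positivity)]
    push_cast
    field_simp
    nlinarith [hc k]
  · rw [funext (hF k), integral_quadratic_mul_exp_neg_mul_Ioi _ _ (hc k)]
    field_simp
    ring

/-- `∫₀^∞ e^{-t} (1 − t/(e^t − 1))² dt = 5 − 4ζ(3)`, where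
`ζ(3) = Σ_{k ≥ 1} 1/k³`. -/
theorem stmt10 :
    ∫ t in Set.Ioi (0 : ℝ), Real.exp (-t) * (1 - t / (Real.exp t - 1)) ^ 2
      = 5 - 4 * ∑' k : ℕ, (1 : ℝ) / ((k : ℝ) + 1) ^ 3 := by
  have hzeta : Summable fun k : ℕ => (1 : ℝ) / ((k : ℝ) + 1) ^ 3 := by
    exact_mod_cast (summable_nat_add_iff 1).mpr (summable_one_div_nat_pow.mpr (by norm_num))
  have hshift (k : ℕ) : -4 / ((k : ℝ) + 2) ^ 3 = -4 * (1 / (((k + 1 : ℕ) : ℝ) + 1) ^ 3) := by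
    push_cast
    ring
  calc ∫ t in Ioi 0, exp (-t) * (1 - t / (exp t - 1)) ^ 2
      = (∫ t in Ioi 0, exp (-t)) +
          ∫ t in Ioi 0, (exp (-t) * (1 - t / (exp t - 1)) ^ 2 - exp (-t)) := by
        rw [integral_sub integrableOn_exp_neg_mul_one_sub_div_exp_sub_one_sq
          (integrableOn_exp_neg_Ioi 0)]
        ring
    _ = 1 + ∑' k : ℕ, -4 / ((k : ℝ) + 2) ^ 3 := by
        rw [integral_exp_neg_Ioi_zero,
          hasSum_integral_exp_neg_mul_one_sub_div_exp_sub_one_sq_sub_exp_neg.tsum_eq]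
    _ = 5 - 4 * ∑' k : ℕ, (1 : ℝ) / ((k : ℝ) + 1) ^ 3 := by
        rw [hzeta.tsum_eq_zero_add, tsum_congr hshift, tsum_mul_left]
        norm_num
        ring
end

section
/- Let G be a finite connected simple d-regular graph with unit resistances, d ≥ 3. Then Σ_{e∈E} R_eff(e)² ≤ 45|V|/d, where R_eff(e) is the effective resistance between the endpoints of e. -/
/-!
Write `r e` for the effective resistance of an edge `e = s(a, b)`, computed from the potential of
a unit current along `e`: the Riesz representative of `h ↦ h a - h b` for the Dirichlet form made
nondegenerate by adding `(∑ x) (∑ y)`. A single edge term of the energy and Cauchy–Schwarz for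
the Dirichlet form give `ReffEdge e ≤ min 1 (r e)`, and Cauchy–Schwarz against `δ_a - δ_b` gives
`r e ≥ t := 2 / (d + 1)`. Foster's theorem `∑ e, r e = n - 1` is a trace computation. Since
`R ^ 2 ≤ (1 + t) r - t` whenever `0 ≤ R ≤ min 1 r` and `t ≤ r`, summing over the `n d / 2` edges
gives `∑ e, ReffEdge e ^ 2 ≤ (1 + t) (n - 1) - t n d / 2 ≤ 3 n / (d + 1)`.
-/

open Finset

/-- Dirichlet energy of a function `h` on the graph `G` with unit resistances. -/
noncomputable def energy {V : Type*} [Fintype V] [DecidableEq V]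
    (G : SimpleGraph V) [DecidableRel G.Adj] (h : V → ℝ) : ℝ :=
  ∑ e ∈ G.edgeFinset,
    Sym2.lift ⟨fun a b => (h a - h b) ^ 2, fun a b => by ring⟩ e

/-- Effective resistance between `u` and `v` in `G` (unit resistances):
its reciprocal is the infimum of the Dirichlet energy over potentials with
`h u = 1`, `h v = 0`. -/
noncomputable def Reff {V : Type*} [Fintype V] [DecidableEq V]
    (G : SimpleGraph V) [DecidableRel G.Adj] (u v : V) : ℝ :=
  (sInf {x : ℝ | ∃ h : V → ℝ, h u = 1 ∧ h v = 0 ∧ x = energy G h})⁻¹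

/-- Effective resistance between the endpoints of an edge `e` (a symmetric
version of `Reff`, defined on unordered pairs). -/
noncomputable def ReffEdge {V : Type*} [Fintype V] [DecidableEq V]
    (G : SimpleGraph V) [DecidableRel G.Adj] (e : Sym2 V) : ℝ :=
  (sInf {x : ℝ | ∃ u v : V, e = s(u, v) ∧
    ∃ h : V → ℝ, h u = 1 ∧ h v = 0 ∧ x = energy G h})⁻¹

lemma sq_le_add_one_mul_sub {R r t : ℝ} (hR : 0 ≤ R) (hR1 : R ≤ 1) (hRr : R ≤ r) (ht : 0 ≤ t)
    (htr : t ≤ r) : R ^ 2 ≤ (1 + t) * r - t := by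
  rcases le_total R t with h | h <;> nlinarith

namespace SimpleGraph

section DirichletForm

variable {V : Type*}

/-- The difference of a function across `e`, for the orientation of `e` chosen by `Quot.out`;
only orientation-independent expressions in it are used. -/
noncomputable def edgeDiff (e : Sym2 V) : Module.Dual ℝ (V → ℝ) :=
  LinearMap.proj (R := ℝ) (φ := fun _ : V => ℝ) e.out.1 - LinearMap.proj e.out.2

lemma edgeDiff_apply (e : Sym2 V) (x : V → ℝ) : edgeDiff e x = x e.out.1 - x e.out.2 := rfl

lemma edgeDiff_const (e : Sym2 V) (c : ℝ) : edgeDiff e (fun _ => c) = 0 := sub_self c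

lemma edgeDiff_mk_sq (a b : V) (x : V → ℝ) : edgeDiff s(a, b) x ^ 2 = (x a - x b) ^ 2 := by
  obtain ⟨p, hp, hpab⟩ : ∃ p, s(a, b).out = p ∧ s(p.1, p.2) = s(a, b) :=
    ⟨_, rfl, s(a, b).out_eq⟩
  rw [edgeDiff_apply, hp]
  rcases Sym2.eq_iff.mp hpab with ⟨ha, hb⟩ | ⟨ha, hb⟩ <;> rw [ha, hb]
  ring

variable [Fintype V]

noncomputable def sumFunctional : Module.Dual ℝ (V → ℝ) := ∑ w, LinearMap.proj w

lemma sumFunctional_apply (x : V → ℝ) : sumFunctional x = ∑ w, x w := by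
  simp [sumFunctional]

lemma Connected.cast_card_ne_zero {G : SimpleGraph V} (hG : G.Connected) :
    (Fintype.card V : ℝ) ≠ 0 :=
  Nat.cast_ne_zero.mpr (Fintype.card_pos_iff.mpr hG.nonempty).ne'

variable (G : SimpleGraph V) [DecidableRel G.Adj]

noncomputable def dirichletForm : LinearMap.BilinForm ℝ (V → ℝ) :=
  ∑ e ∈ G.edgeFinset, (edgeDiff e).smulRight (edgeDiff e)

/-- Adding `(∑ x) (∑ y)` removes the constants, the kernel of the Dirichlet form of a connected
graph. -/
noncomputable def augmentedForm : LinearMap.BilinForm ℝ (V → ℝ) :=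
  G.dirichletForm + sumFunctional.smulRight sumFunctional

lemma dirichletForm_apply (x y : V → ℝ) :
    G.dirichletForm x y = ∑ e ∈ G.edgeFinset, edgeDiff e x * edgeDiff e y := by
  simp [dirichletForm, LinearMap.sum_apply]

lemma augmentedForm_apply (x y : V → ℝ) :
    G.augmentedForm x y = G.dirichletForm x y + (∑ w, x w) * ∑ w, y w := by
  simp [augmentedForm, sumFunctional_apply]

lemma dirichletForm_self_nonneg (x : V → ℝ) : 0 ≤ G.dirichletForm x x := by
  rw [dirichletForm_apply]
  exact sum_nonneg fun e _ => mul_self_nonneg (edgeDiff e x)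

lemma dirichletForm_const (x : V → ℝ) (c : ℝ) : G.dirichletForm x (fun _ => c) = 0 := by
  simp [dirichletForm_apply, edgeDiff_const]

lemma edgeDiff_sq_le_dirichletForm {e : Sym2 V} (he : e ∈ G.edgeFinset) (x : V → ℝ) :
    edgeDiff e x ^ 2 ≤ G.dirichletForm x x := by
  simp only [dirichletForm_apply, ← sq]
  exact single_le_sum (f := fun e => edgeDiff e x ^ 2) (fun _ _ => sq_nonneg _) he

lemma energy_eq_dirichletForm [DecidableEq V] (h : V → ℝ) : energy G h = G.dirichletForm h h := by
  rw [energy, dirichletForm_apply]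
  refine sum_congr rfl fun e _ => ?_
  induction e using Sym2.ind with
  | h a b => rw [Sym2.lift_mk, ← sq, edgeDiff_mk_sq]

lemma dirichletForm_single_sub_single [DecidableEq V] {a b : V} (hab : G.Adj a b) :
    G.dirichletForm (Pi.single a 1 - Pi.single b 1) (Pi.single a 1 - Pi.single b 1)
      = G.degree a + G.degree b + 2 := by
  have hterm : ∀ e ∈ G.edgeFinset, edgeDiff e (Pi.single a 1 - Pi.single b 1)
      * edgeDiff e (Pi.single a 1 - Pi.single b 1)
      = (if a ∈ e then 1 else 0) + (if b ∈ e then 1 else 0) + (if e = s(a, b) then 2 else 0) := by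
    intro e he
    induction e using Sym2.ind with
    | h x y =>
      have hxy := (G.mem_edgeFinset.mp he).ne
      rw [← sq, edgeDiff_mk_sq]
      simp only [Pi.sub_apply, Pi.single_apply, Sym2.mem_iff, Sym2.eq_iff, @eq_comm _ a,
        @eq_comm _ b]
      split_ifs <;> subst_vars <;> simp_all <;> norm_num
  rw [dirichletForm_apply, sum_congr rfl hterm, sum_add_distrib, sum_add_distrib, sum_boole,
    sum_boole, ← incidenceFinset_eq_filter, ← incidenceFinset_eq_filter,
    card_incidenceFinset_eq_degree, card_incidenceFinset_eq_degree,
    sum_ite_eq' _ _ _, if_pos (G.mem_edgeFinset.mpr hab)]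

variable {G}

lemma Connected.eq_of_dirichletForm_self_eq_zero (hG : G.Connected) {x : V → ℝ}
    (hx : G.dirichletForm x x = 0) (a b : V) : x a = x b := by
  have hadj : ∀ a b, G.Adj a b → x a = x b := by
    intro a b hab
    have hsq : edgeDiff s(a, b) x ^ 2 = 0 :=
      le_antisymm (hx ▸ G.edgeDiff_sq_le_dirichletForm (G.mem_edgeFinset.mpr hab) x)
        (sq_nonneg _)
    rwa [edgeDiff_mk_sq, sq_eq_zero_iff, sub_eq_zero] at hsq
  obtain ⟨w⟩ := hG.preconnected a b
  induction w with
  | nil => rfl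
  | cons hA _ ih => exact (hadj _ _ hA).trans ih

lemma Connected.augmentedForm_nondegenerate (hG : G.Connected) :
    G.augmentedForm.Nondegenerate := by
  have hpos : ∀ x, G.augmentedForm x x = 0 → x = 0 := by
    intro x hx
    rw [augmentedForm_apply] at hx
    obtain ⟨hE, hsum⟩ := (add_eq_zero_iff_of_nonneg (G.dirichletForm_self_nonneg x)
      (mul_self_nonneg _)).mp hx
    have hconst := hG.eq_of_dirichletForm_self_eq_zero hE
    funext a
    rw [mul_self_eq_zero, sum_congr rfl fun b _ => hconst b a, sum_const, card_univ,
      nsmul_eq_mul] at hsum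
    exact (mul_eq_zero.mp hsum).resolve_left hG.cast_card_ne_zero
  exact ⟨fun x hx => hpos x (hx x), fun y hy => hpos y (hy y)⟩

end DirichletForm

section Resistance

variable {V : Type*} [Fintype V] {G : SimpleGraph V} [DecidableRel G.Adj] (hG : G.Connected)

noncomputable def potential (e : Sym2 V) : V → ℝ :=
  (G.augmentedForm.toDual hG.augmentedForm_nondegenerate).symm (edgeDiff e)

noncomputable def edgeResistance (e : Sym2 V) : ℝ := edgeDiff e (potential hG e)

lemma augmentedForm_potential (e : Sym2 V) (h : V → ℝ) :
    G.augmentedForm (potential hG e) h = edgeDiff e h :=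
  LinearMap.BilinForm.apply_toDual_symm_apply _ _

lemma dirichletForm_potential (e : Sym2 V) (h : V → ℝ) :
    G.dirichletForm (potential hG e) h = edgeDiff e h := by
  have hsum : ∑ w, potential hG e w = 0 := by
    have h1 := augmentedForm_potential hG e (fun _ => 1)
    rw [augmentedForm_apply, dirichletForm_const, edgeDiff_const, zero_add, sum_const,
      card_univ, nsmul_one] at h1
    exact (mul_eq_zero.mp h1).resolve_right hG.cast_card_ne_zero
  rw [← augmentedForm_potential hG e h, augmentedForm_apply, hsum, zero_mul, add_zero]

lemma edgeDiff_sq_le (e : Sym2 V) (h : V → ℝ) :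
    edgeDiff e h ^ 2 ≤ edgeResistance hG e * G.dirichletForm h h :=
  calc edgeDiff e h ^ 2 = G.dirichletForm (potential hG e) h ^ 2 := by
        rw [dirichletForm_potential]
    _ ≤ G.dirichletForm (potential hG e) (potential hG e) * G.dirichletForm h h := by
        simp only [dirichletForm_apply, ← sq]
        exact sum_mul_sq_le_sq_mul_sq _ _ _
    _ = edgeResistance hG e * G.dirichletForm h h := by
        rw [dirichletForm_potential, edgeResistance]

/-- Foster's theorem. The sum is the trace of `g ↦ ∑ e, edgeDiff e g • potential hG e`, which is
the projection onto the functions of sum zero along the constants. -/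
theorem sum_edgeResistance :
    ∑ e ∈ G.edgeFinset, edgeResistance hG e = Fintype.card V - 1 := by
  set Φ := G.augmentedForm.toDual hG.augmentedForm_nondegenerate
  have hσ : Φ.symm sumFunctional = (Fintype.card V : ℝ)⁻¹ • fun _ => 1 := by
    rw [LinearEquiv.symm_apply_eq]
    ext h
    simp [Φ, LinearMap.BilinForm.toDual_def, augmentedForm_apply, dirichletForm_apply,
      edgeDiff_apply, sumFunctional_apply, hG.cast_card_ne_zero]
  have hproj : ∑ e ∈ G.edgeFinset, (edgeDiff e).smulRight (potential hG e)
      = LinearMap.id - sumFunctional.smulRight (Φ.symm sumFunctional) := by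
    ext g : 1
    have hE : G.dirichletForm g = Φ g - sumFunctional g • sumFunctional := by
      ext h
      simp [Φ, LinearMap.BilinForm.toDual_def, augmentedForm_apply, sumFunctional_apply]
    calc (∑ e ∈ G.edgeFinset, (edgeDiff e).smulRight (potential hG e)) g
        = Φ.symm (∑ e ∈ G.edgeFinset, edgeDiff e g • edgeDiff e) := by
          simp [LinearMap.sum_apply, potential, Φ]
      _ = Φ.symm (G.dirichletForm g) := by
          simp [dirichletForm, LinearMap.sum_apply]
      _ = g - sumFunctional g • Φ.symm sumFunctional := by
          rw [hE, map_sub, map_smul, LinearEquiv.symm_apply_apply]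
  have htrace := congrArg (LinearMap.trace ℝ (V → ℝ)) hproj
  simp only [map_sum, LinearMap.trace_smulRight, map_sub, LinearMap.trace_id,
    Module.finrank_fintype_fun_eq_card, hσ] at htrace
  simpa [edgeResistance, sumFunctional_apply, hG.cast_card_ne_zero] using htrace

lemma four_div_le_edgeResistance [DecidableEq V] {a b : V} (hab : G.Adj a b) :
    4 / (G.degree a + G.degree b + 2 : ℝ) ≤ edgeResistance hG s(a, b) := by
  have hdiff : edgeDiff s(a, b) (Pi.single a 1 - Pi.single b 1) ^ 2 = 4 := by
    rw [edgeDiff_mk_sq]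
    simp [hab.ne, hab.ne.symm]
    norm_num
  have hCS := edgeDiff_sq_le hG s(a, b) (Pi.single a 1 - Pi.single b 1)
  rw [hdiff, G.dirichletForm_single_sub_single hab] at hCS
  exact (div_le_iff₀ (by positivity)).mpr hCS

variable [DecidableEq V]

lemma reffEdge_pos_le_one_le_edgeResistance {e : Sym2 V} (he : e ∈ G.edgeFinset) :
    0 < ReffEdge G e ∧ ReffEdge G e ≤ 1 ∧ ReffEdge G e ≤ edgeResistance hG e := by
  set S := {x : ℝ | ∃ u v : V, e = s(u, v) ∧ ∃ h : V → ℝ, h u = 1 ∧ h v = 0 ∧ x = energy G h}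
  have hS : ∀ x ∈ S, 1 ≤ x ∧ 1 ≤ edgeResistance hG e * x := by
    rintro x ⟨u, v, rfl, h, hu, hv, rfl⟩
    have h1 : edgeDiff s(u, v) h ^ 2 = 1 := by rw [edgeDiff_mk_sq, hu, hv]; norm_num
    rw [energy_eq_dirichletForm]
    exact ⟨h1 ▸ G.edgeDiff_sq_le_dirichletForm he h, h1 ▸ edgeDiff_sq_le hG _ h⟩
  obtain ⟨x₀, hx₀⟩ : S.Nonempty := by
    induction e using Sym2.ind with
    | h a b =>
      exact ⟨_, a, b, rfl, Pi.single a 1, by simp,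
        by simp [(G.mem_edgeFinset.mp he).ne.symm], rfl⟩
  have hr : 0 < edgeResistance hG e := by nlinarith [hS x₀ hx₀]
  have h1 : 1 ≤ sInf S := le_csInf ⟨x₀, hx₀⟩ fun x hx => (hS x hx).1
  have h2 : (edgeResistance hG e)⁻¹ ≤ sInf S := le_csInf ⟨x₀, hx₀⟩ fun x hx => by
    rw [inv_le_iff_one_le_mul₀' hr]; exact (hS x hx).2
  change 0 < (sInf S)⁻¹ ∧ (sInf S)⁻¹ ≤ 1 ∧ (sInf S)⁻¹ ≤ edgeResistance hG e
  refine ⟨inv_pos.mpr (by linarith), inv_le_one_of_one_le₀ h1, ?_⟩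
  simpa using inv_anti₀ (inv_pos.mpr hr) h2

theorem reffEdge_sq_le {a b : V} (hab : G.Adj a b) :
    ReffEdge G s(a, b) ^ 2 ≤ (1 + 4 / (G.degree a + G.degree b + 2 : ℝ))
      * edgeResistance hG s(a, b) - 4 / (G.degree a + G.degree b + 2 : ℝ) := by
  obtain ⟨hpos, hle1, hler⟩ :=
    reffEdge_pos_le_one_le_edgeResistance hG (G.mem_edgeFinset.mpr hab : s(a, b) ∈ G.edgeFinset)
  exact sq_le_add_one_mul_sub hpos.le hle1 hler (by positivity)
    (four_div_le_edgeResistance hG hab)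

end Resistance

lemma IsRegularOfDegree.card_mul_eq_two_mul_card_edgeFinset {V : Type*} [Fintype V]
    {G : SimpleGraph V} [DecidableRel G.Adj] {d : ℕ} (hreg : G.IsRegularOfDegree d) :
    Fintype.card V * d = 2 * #G.edgeFinset := by
  rw [← sum_degrees_eq_twice_card_edges, sum_congr rfl fun v _ => hreg.degree_eq v, sum_const,
    card_univ, smul_eq_mul]

theorem sum_reffEdge_sq_le {V : Type*} [Fintype V] [DecidableEq V] {G : SimpleGraph V}
    [DecidableRel G.Adj] (hG : G.Connected) {d : ℕ} (hreg : G.IsRegularOfDegree d) :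
    ∑ e ∈ G.edgeFinset, ReffEdge G e ^ 2 ≤ 3 * Fintype.card V / (d + 1) := by
  set t : ℝ := 4 / (d + d + 2)
  have hpoint : ∀ e ∈ G.edgeFinset, ReffEdge G e ^ 2 ≤ (1 + t) * edgeResistance hG e - t := by
    intro e he
    induction e using Sym2.ind with
    | h a b =>
      have := reffEdge_sq_le hG (G.mem_edgeFinset.mp he)
      rwa [hreg.degree_eq, hreg.degree_eq] at this
  have hcard : (Fintype.card V * d : ℝ) = 2 * #G.edgeFinset := by
    exact_mod_cast hreg.card_mul_eq_two_mul_card_edgeFinset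
  calc ∑ e ∈ G.edgeFinset, ReffEdge G e ^ 2
      ≤ ∑ e ∈ G.edgeFinset, ((1 + t) * edgeResistance hG e - t) := sum_le_sum hpoint
    _ = (1 + t) * (Fintype.card V - 1) - #G.edgeFinset * t := by
      rw [sum_sub_distrib, ← mul_sum, sum_edgeResistance, sum_const, nsmul_eq_mul]
    _ ≤ 3 * Fintype.card V / (d + 1) := by
      rw [le_div_iff₀ (by positivity)]
      simp only [t]
      field_simp
      nlinarith

end SimpleGraph

theorem stmt14_general {V : Type*} [Fintype V] [DecidableEq V]
    (G : SimpleGraph V) [DecidableRel G.Adj] (hG : G.Connected)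
    (d : ℕ) (hreg : G.IsRegularOfDegree d) :
    ∑ e ∈ G.edgeFinset, ReffEdge G e ^ 2
      ≤ 45 * (Fintype.card V : ℝ) / (d : ℝ) := by
  rcases Nat.eq_zero_or_pos d with rfl | hd
  · have hE : #G.edgeFinset = 0 := by
      have := hreg.card_mul_eq_two_mul_card_edgeFinset
      omega
    simp [card_eq_zero.mp hE]
  · calc ∑ e ∈ G.edgeFinset, ReffEdge G e ^ 2 ≤ 3 * Fintype.card V / (d + 1) :=
        SimpleGraph.sum_reffEdge_sq_le hG hreg
      _ ≤ 45 * Fintype.card V / d := by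
        rw [div_le_div_iff₀ (by positivity) (by positivity)]
        nlinarith

/-- For a finite connected simple `d`-regular graph with `d ≥ 3`, the sum over
edges of the squared effective resistance is at most `45|V|/d`. -/
theorem stmt14 {V : Type*} [Fintype V] [DecidableEq V]
    (G : SimpleGraph V) [DecidableRel G.Adj] (hG : G.Connected)
    (d : ℕ) (hd : 3 ≤ d) (hreg : G.IsRegularOfDegree d) :
    ∑ e ∈ G.edgeFinset, ReffEdge G e ^ 2
      ≤ 45 * (Fintype.card V : ℝ) / (d : ℝ) :=
  stmt14_general G hG d hreg
end
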